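/- The n-qubit quantum Fourier transform matrix F_n satisfies the recursion F_n = H₁ · D_n · (I₂ ⊗ F_{n−1}) · Q_n, where H₁ = H ⊗ I^{⊗(n−1)}, D_n = diag(I^{⊗(n−1)}, Ω_{n−1}) with Ω_{n−1} = diag(1, ω_n, …, ω_n^{2^{n−1}−1}), ω_n = exp(2πi/2^n), and Q_n is the cyclic qubit permutation Q_n = χ_{n−1}^n ⋯ χ_2^n χ_1^n (products of SWAP gates). -/

import Mathlib

/-!
Write a row index as `j = 2^n a + b` (`a` the top qubit) and a column index as `ℓ = 2m + r`
(`r` the bottom qubit). `Q_{n+1}` moves column `ℓ` to `2^n r + m`, where `I₂ ⊗ F_n` and `D_{n+1}`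
act blockwise, so the `(j, ℓ)` entry of the product is `H_{ar} ω_{n+1}^{rb} ω_n^{bm} / √(2^n)`.
Expanding `ω_{n+1}^{jℓ}` with `ω_{n+1}^{2^n} = -1` and `ω_{n+1}^2 = ω_n` gives the same value.
-/

open Matrix Kronecker

/-- The `n`-qubit quantum Fourier transform: the `2^n × 2^n` matrix with
`(j, ℓ)` entry `ω_n^{jℓ} / √(2^n)`, `ω_n = exp(2πi/2^n)` (indices from `0`). -/
noncomputable def qft (n : ℕ) : Matrix (Fin (2 ^ n)) (Fin (2 ^ n)) ℂ :=
  Matrix.of fun j l =>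
    Complex.exp (2 * Real.pi * Complex.I * (j.val * l.val) / (2 ^ n)) / Real.sqrt (2 ^ n)

/-- The Hadamard gate `H = (1/√2)[[1,1],[1,−1]]`. -/
noncomputable def Hgate : Matrix (Fin 2) (Fin 2) ℂ :=
  ((Real.sqrt 2 : ℂ))⁻¹ • !![1, 1; 1, -1]

/-- `D_{n+1} = diag(I^{⊗n}, Ω_n)` where `Ω_n = diag(1, ω_{n+1}, …, ω_{n+1}^{2^n − 1})`,
`ω_{n+1} = exp(2πi/2^{n+1})`. -/
noncomputable def Dmat (n : ℕ) : Matrix (Fin (2 ^ (n + 1))) (Fin (2 ^ (n + 1))) ℂ :=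
  Matrix.diagonal fun i =>
    if i.val < 2 ^ n then 1
    else Complex.exp (2 * Real.pi * Complex.I * ((i.val - 2 ^ n : ℕ)) / (2 ^ (n + 1)))

/-- The cyclic qubit permutation `Q_n = χ_{n−1}^n ⋯ χ_2^n χ_1^n`, which sends the
basis state with bits `b₁…b_n` to the one with bits `b_n b₁ … b_{n−1}`
(as a matrix: `Q e_ℓ = e_{ℓ/2 + (ℓ mod 2)·2^{n−1}}`). -/
noncomputable def Qperm (n : ℕ) : Matrix (Fin (2 ^ n)) (Fin (2 ^ n)) ℂ :=
  Matrix.of fun k l => if k.val = l.val / 2 + l.val % 2 * 2 ^ (n - 1) then 1 else 0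

/-- Reindexing `Fin 2 × Fin (2^n) ≃ Fin (2^(n+1))` (first factor = qubit 1 = most
significant bit). -/
def qubitSplit (n : ℕ) : Fin 2 × Fin (2 ^ n) ≃ Fin (2 ^ (n + 1)) :=
  finProdFinEquiv.trans (finCongr (by rw [pow_succ, Nat.mul_comm]))

/-- `σ_{1z} = σ_z ⊗ I^{⊗(n−1)}`: qubit 1 is the most significant bit. -/
noncomputable def sigma1Z (n : ℕ) : Matrix (Fin (2 ^ n)) (Fin (2 ^ n)) ℂ :=
  Matrix.diagonal fun i => if i.val < 2 ^ (n - 1) then 1 else -1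

/-- `σ_{nz} = I^{⊗(n-1)} ⊗ σ_z`: qubit `n` is the least significant bit. -/
noncomputable def sigmaNZ (n : ℕ) : Matrix (Fin (2 ^ n)) (Fin (2 ^ n)) ℂ :=
  Matrix.diagonal fun i => if i.val % 2 = 0 then 1 else -1

lemma pow_add_mul_add_two_mul_of_pow_eq_neg_one {R : Type*} [CommRing R] {ζ : R} {N : ℕ}
    (hζ : ζ ^ N = -1) (a b r m : ℕ) :
    ζ ^ ((b + N * a) * (r + 2 * m)) = (-1) ^ (a * r) * ζ ^ (r * b) * (ζ ^ 2) ^ (b * m) := by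
  have hexp : (b + N * a) * (r + 2 * m)
      = r * b + 2 * (b * m) + N * (a * r) + N * (2 * (a * m)) := by
    ring
  rw [hexp, pow_add, pow_add, pow_add, pow_mul ζ 2, pow_mul ζ N, pow_mul ζ N, hζ, pow_mul (-1) 2,
    neg_one_sq, one_pow, mul_one]
  ring

lemma reindex_kronecker_one_mul_mul_one_kronecker_apply_of_isDiag
    {R α β κ : Type*} [CommSemiring R] [Fintype α] [Fintype β] [DecidableEq α] [DecidableEq β]
    [Fintype κ] [DecidableEq κ] (e : α × β ≃ κ) (A : Matrix α α R) {D : Matrix κ κ R}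
    (hD : D.IsDiag) (B : Matrix β β R) (a r : α) (b m : β) :
    (reindex e e (A ⊗ₖ (1 : Matrix β β R)) * D * reindex e e ((1 : Matrix α α R) ⊗ₖ B))
        (e (a, b)) (e (r, m)) = A a r * D (e (r, b)) (e (r, b)) * B b m := by
  rw [← hD.diagonal_diag]
  simp [mul_apply, one_apply, diagonal_apply, Fintype.sum_prod_type, ← e.sum_comp, ite_and,
    eq_comm (a := b)]

def lowQubitSplit (n : ℕ) : Fin (2 ^ n) × Fin 2 ≃ Fin (2 ^ (n + 1)) :=
  finProdFinEquiv.trans (finCongr (pow_succ 2 n).symm)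

lemma qubitSplit_val (n : ℕ) (a : Fin 2) (b : Fin (2 ^ n)) :
    (qubitSplit n (a, b) : ℕ) = b + 2 ^ n * a := by
  simp [qubitSplit]

lemma lowQubitSplit_val (n : ℕ) (m : Fin (2 ^ n)) (r : Fin 2) :
    (lowQubitSplit n (m, r) : ℕ) = r + 2 * m := by
  simp [lowQubitSplit]

lemma Qperm_lowQubitSplit (n : ℕ) (k : Fin (2 ^ (n + 1))) (m : Fin (2 ^ n)) (r : Fin 2) :
    Qperm (n + 1) k (lowQubitSplit n (m, r)) = if k = qubitSplit n (r, m) then 1 else 0 := by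
  have hr := r.isLt
  simp only [Qperm, of_apply, Fin.ext_iff, lowQubitSplit_val, qubitSplit_val, Nat.add_sub_cancel]
  congr 1
  rw [Nat.add_mul_div_left _ _ two_pos, Nat.add_mul_mod_self_left, Nat.div_eq_of_lt hr,
    Nat.mod_eq_of_lt hr]
  ring_nf

lemma mul_Qperm_lowQubitSplit (n : ℕ) (A : Matrix (Fin (2 ^ (n + 1))) (Fin (2 ^ (n + 1))) ℂ)
    (j : Fin (2 ^ (n + 1))) (m : Fin (2 ^ n)) (r : Fin 2) :
    (A * Qperm (n + 1)) j (lowQubitSplit n (m, r)) = A j (qubitSplit n (r, m)) := by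
  simp [mul_apply, Qperm_lowQubitSplit]

noncomputable def qftRoot (n : ℕ) : ℂ := Complex.exp (2 * Real.pi * Complex.I / 2 ^ n)

lemma qft_apply (n : ℕ) (j l : Fin (2 ^ n)) :
    qft n j l = qftRoot n ^ (j.val * l.val) / Real.sqrt (2 ^ n) := by
  rw [qft, of_apply, qftRoot, ← Complex.exp_nat_mul]
  push_cast
  ring_nf

lemma Dmat_isDiag (n : ℕ) : (Dmat n).IsDiag := isDiag_diagonal _

lemma Dmat_qubitSplit (n : ℕ) (c : Fin 2) (y : Fin (2 ^ n)) :
    Dmat n (qubitSplit n (c, y)) (qubitSplit n (c, y)) = qftRoot (n + 1) ^ (c.val * y.val) := by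
  have hy := y.isLt
  rw [Dmat, diagonal_apply_eq, qubitSplit_val]
  fin_cases c
  · simp [hy]
  · simp [qftRoot, ← Complex.exp_nat_mul]
    ring_nf

lemma qftRoot_succ_sq (n : ℕ) : qftRoot (n + 1) ^ 2 = qftRoot n := by
  rw [qftRoot, qftRoot, ← Complex.exp_nat_mul, pow_succ]
  congr 1
  push_cast
  field_simp

lemma qftRoot_succ_pow_two_pow (n : ℕ) : qftRoot (n + 1) ^ 2 ^ n = -1 := by
  rw [qftRoot, ← Complex.exp_nat_mul, ← Complex.exp_pi_mul_I, pow_succ]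
  congr 1
  push_cast
  field_simp

lemma Hgate_apply (a r : Fin 2) : Hgate a r = (Real.sqrt 2 : ℂ)⁻¹ * (-1) ^ (a.val * r.val) := by
  fin_cases a <;> fin_cases r <;> simp [Hgate]

lemma sqrt_two_pow_succ (n : ℕ) : Real.sqrt (2 ^ (n + 1)) = Real.sqrt 2 * Real.sqrt (2 ^ n) := by
  rw [pow_succ', Real.sqrt_mul zero_le_two]

/-- The QFT recursion `F_{n+1} = H₁ · D_{n+1} · (I₂ ⊗ F_n) · Q_{n+1}`, where
`H₁ = H ⊗ I^{⊗ n}` and `D_{n+1} = diag(I^{⊗ n}, Ω_n)`. -/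
theorem stmt_13 (n : ℕ) :
    qft (n + 1)
      = Matrix.reindex (qubitSplit n) (qubitSplit n)
          (Hgate ⊗ₖ (1 : Matrix (Fin (2 ^ n)) (Fin (2 ^ n)) ℂ)) *
        Dmat n *
        Matrix.reindex (qubitSplit n) (qubitSplit n)
          ((1 : Matrix (Fin 2) (Fin 2) ℂ) ⊗ₖ qft n) *
        Qperm (n + 1) := by
  ext j l
  obtain ⟨⟨a, b⟩, rfl⟩ := (qubitSplit n).surjective j
  obtain ⟨⟨m, r⟩, rfl⟩ := (lowQubitSplit n).surjective l
  rw [mul_Qperm_lowQubitSplit,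
    reindex_kronecker_one_mul_mul_one_kronecker_apply_of_isDiag _ _ (Dmat_isDiag n),
    Dmat_qubitSplit, qft_apply, qft_apply, Hgate_apply, qubitSplit_val, lowQubitSplit_val,
    pow_add_mul_add_two_mul_of_pow_eq_neg_one (qftRoot_succ_pow_two_pow n), qftRoot_succ_sq,
    sqrt_two_pow_succ]
  push_cast
  field_simp
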